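/- Let n be a positive integer and let A and B be n×n circulant matrices over F_2 satisfying A·Aᵀ + B·Bᵀ = I_n, and suppose the sum of the weights of the first row of A and the first row of B is congruent to 1 modulo 4. Then the self-dual [4n,2n] code that is the row space of (I_{2n} | M), where M is the block matrix with blocks A, B in the top row and Bᵀ, Aᵀ in the bottom row, is singly even, i.e., it contains a codeword whose weight is congruent to 2 modulo 4. -/
import Mathlib


open scoped BigOperators
open Matrix

/-- The (Hamming) weight of a binary vector: the number of nonzero coordinates. -/
def wt {m : ℕ} (x : Fin m → ZMod 2) : ℕ :=
  (Finset.univ.filter fun i => x i ≠ 0).card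

/-- The dual code of a binary code `C` of length `m`, with respect to the
standard inner product. -/
def dualCode {m : ℕ} (C : Submodule (ZMod 2) (Fin m → ZMod 2)) :
    Submodule (ZMod 2) (Fin m → ZMod 2) where
  carrier := {x | ∀ y ∈ C, ∑ i, x i * y i = 0}
  add_mem' := by
    intro a b ha hb y hy
    simp only [Set.mem_setOf_eq] at *
    simp only [Pi.add_apply, add_mul, Finset.sum_add_distrib, ha y hy, hb y hy, add_zero]
  zero_mem' := by
    intro y hy
    simp
  smul_mem' := by
    intro c a ha y hy
    simp only [Set.mem_setOf_eq] at *
    simp only [Pi.smul_apply, smul_eq_mul, mul_assoc, ← Finset.mul_sum, ha y hy, mul_zero]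

/-- A binary code is self-dual if it equals its dual code. -/
def IsSelfDual {m : ℕ} (C : Submodule (ZMod 2) (Fin m → ZMod 2)) : Prop :=
  C = dualCode C

/-- A code is singly even if it contains a codeword of weight ≡ 2 (mod 4). -/
def SinglyEven {m : ℕ} (C : Submodule (ZMod 2) (Fin m → ZMod 2)) : Prop :=
  ∃ x ∈ C, wt x % 4 = 2

/-- A code is doubly even if every codeword has weight divisible by 4. -/
def DoublyEven {m : ℕ} (C : Submodule (ZMod 2) (Fin m → ZMod 2)) : Prop :=
  ∀ x ∈ C, wt x % 4 = 0

/-- `HasMinWeight C d` : the minimum weight of a nonzero codeword of `C` is `d`. -/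
def HasMinWeight {m : ℕ} (C : Submodule (ZMod 2) (Fin m → ZMod 2)) (d : ℕ) : Prop :=
  (∃ x ∈ C, x ≠ 0 ∧ wt x = d) ∧ ∀ x ∈ C, x ≠ 0 → d ≤ wt x

/-- `Awt C w` : the number of codewords of `C` of weight `w`. -/
noncomputable def Awt {m : ℕ} (C : Submodule (ZMod 2) (Fin m → ZMod 2)) (w : ℕ) : ℕ :=
  Set.ncard {x : Fin m → ZMod 2 | x ∈ C ∧ wt x = w}

/-- Two codes of length `m` are equivalent if some permutation of the `m`
coordinates maps one onto the other. -/
def CodeEquiv {m : ℕ} (C D : Submodule (ZMod 2) (Fin m → ZMod 2)) : Prop :=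
  ∃ σ : Equiv.Perm (Fin m), ∀ x : Fin m → ZMod 2, x ∈ C ↔ (fun i => x (σ i)) ∈ D

/-- `HasCoveringRadius C r` : the covering radius of `C` is exactly `r`, i.e. every
vector is within Hamming distance `r` of a codeword, and some vector has distance
at least `r` from every codeword. -/
def HasCoveringRadius {m : ℕ} (C : Submodule (ZMod 2) (Fin m → ZMod 2)) (r : ℕ) : Prop :=
  (∀ v : Fin m → ZMod 2, ∃ c ∈ C, wt (v - c) ≤ r) ∧
  (∃ v : Fin m → ZMod 2, ∀ c ∈ C, r ≤ wt (v - c))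

/-- A matrix is circulant if each row is the cyclic shift of the previous one. -/
def IsCirculant {n : ℕ} (A : Matrix (Fin n) (Fin n) (ZMod 2)) : Prop :=
  ∃ v : Fin n → ZMod 2, A = Matrix.circulant v

/-- Entry of a matrix extended by zero to all of ℕ × ℕ. -/
def matEntry {n : ℕ} (A : Matrix (Fin n) (Fin n) (ZMod 2)) (a b : ℕ) : ZMod 2 :=
  if h : a < n ∧ b < n then A ⟨a, h.1⟩ ⟨b, h.2⟩ else 0

/-- The `(a, b)` entry (for `a < 2n`, `b < 4n`) of the generator matrix
`(I_{2n} | M)`, where `M` is the block matrix with blocks `A`, `B` in the top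
row and `Bᵀ`, `Aᵀ` in the bottom row. -/
def fourCircEntry {n : ℕ} (A B : Matrix (Fin n) (Fin n) (ZMod 2)) (a b : ℕ) : ZMod 2 :=
  if b < 2 * n then (if a = b then 1 else 0)
  else
    if a < n then
      (if b - 2 * n < n then matEntry A a (b - 2 * n) else matEntry B a (b - 2 * n - n))
    else
      (if b - 2 * n < n then matEntry B (b - 2 * n) (a - n)
       else matEntry A (b - 2 * n - n) (a - n))

/-- The four-circulant code of length `4n` determined by circulant matrices `A`
and `B`: the row space of the generator matrix `(I_{2n} | M)`, where `M` is the
block matrix with blocks `A`, `B` in the top row and `Bᵀ`, `Aᵀ` in the bottom row. -/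
def fourCircCode (n : ℕ) (A B : Matrix (Fin n) (Fin n) (ZMod 2)) :
    Submodule (ZMod 2) (Fin (4 * n) → ZMod 2) :=
  Submodule.span (ZMod 2)
    (Set.range fun i : Fin (2 * n) => fun j : Fin (4 * n) => fourCircEntry A B (i : ℕ) (j : ℕ))

/-- A code of length `m` is four-circulant if `m = 4n` and it is the row space of
a matrix `(I_{2n} | M)`, where `M` is the block matrix with blocks `A`, `B` in the
top row and `Bᵀ`, `Aᵀ` in the bottom row, for some `n × n` circulant matrices `A`, `B`. -/
def IsFourCirculant {m : ℕ} (C : Submodule (ZMod 2) (Fin m → ZMod 2)) : Prop :=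
  ∃ n : ℕ, m = 4 * n ∧
    ∃ A B : Matrix (Fin n) (Fin n) (ZMod 2), IsCirculant A ∧ IsCirculant B ∧
      C = Submodule.span (ZMod 2)
        (Set.range fun i : Fin (2 * n) => fun j : Fin m => fourCircEntry A B (i : ℕ) (j : ℕ))


section Aux
variable {n : ℕ} (A B : Matrix (Fin n) (Fin n) (ZMod 2))

lemma fce_lt {a b : ℕ} (hb : b < 2 * n) :
    fourCircEntry A B a b = if a = b then 1 else 0 := by
  simp [fourCircEntry, hb]

lemma fce_A {a k : ℕ} (ha : a < n) (hk : k < n) :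
    fourCircEntry A B a (2 * n + k) = matEntry A a k := by
  unfold fourCircEntry
  rw [if_neg (by omega), if_pos ha]
  have h1 : 2 * n + k - 2 * n = k := by omega
  rw [h1, if_pos hk]

lemma fce_B {a k : ℕ} (ha : a < n) (hk : k < n) :
    fourCircEntry A B a (2 * n + (n + k)) = matEntry B a k := by
  unfold fourCircEntry
  rw [if_neg (by omega), if_pos ha]
  have h1 : 2 * n + (n + k) - 2 * n = n + k := by omega
  rw [h1, if_neg (by omega)]
  congr 1
  omega

lemma fce_Bt {a k : ℕ} (ha : ¬ a < n) (hk : k < n) :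
    fourCircEntry A B a (2 * n + k) = matEntry B k (a - n) := by
  unfold fourCircEntry
  rw [if_neg (by omega), if_neg ha]
  have h1 : 2 * n + k - 2 * n = k := by omega
  rw [h1, if_pos hk]

lemma fce_At {a k : ℕ} (ha : ¬ a < n) (hk : k < n) :
    fourCircEntry A B a (2 * n + (n + k)) = matEntry A k (a - n) := by
  unfold fourCircEntry
  rw [if_neg (by omega), if_neg ha]
  have h1 : 2 * n + (n + k) - 2 * n = n + k := by omega
  rw [h1, if_neg (by omega)]
  congr 1
  omega

lemma sum_matRR (X Y : Matrix (Fin n) (Fin n) (ZMod 2)) {a b : ℕ} (ha : a < n) (hb : b < n) :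
    ∑ k ∈ Finset.range n, matEntry X a k * matEntry Y b k = (X * Yᵀ) ⟨a, ha⟩ ⟨b, hb⟩ := by
  rw [Matrix.mul_apply,
    ← Fin.sum_univ_eq_sum_range (fun k => matEntry X a k * matEntry Y b k) n]
  refine Finset.sum_congr rfl fun k _ => ?_
  simp [matEntry, ha, hb, k.isLt, Matrix.transpose_apply]

lemma sum_matRC (X Y : Matrix (Fin n) (Fin n) (ZMod 2)) {a b : ℕ} (ha : a < n) (hb : b < n) :
    ∑ k ∈ Finset.range n, matEntry X a k * matEntry Y k b = (X * Y) ⟨a, ha⟩ ⟨b, hb⟩ := by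
  rw [Matrix.mul_apply,
    ← Fin.sum_univ_eq_sum_range (fun k => matEntry X a k * matEntry Y k b) n]
  refine Finset.sum_congr rfl fun k _ => ?_
  simp [matEntry, ha, hb, k.isLt]

lemma sum_matCC (X Y : Matrix (Fin n) (Fin n) (ZMod 2)) {a b : ℕ} (ha : a < n) (hb : b < n) :
    ∑ k ∈ Finset.range n, matEntry X k a * matEntry Y k b = (Xᵀ * Y) ⟨a, ha⟩ ⟨b, hb⟩ := by
  rw [Matrix.mul_apply,
    ← Fin.sum_univ_eq_sum_range (fun k => matEntry X k a * matEntry Y k b) n]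
  refine Finset.sum_congr rfl fun k _ => ?_
  simp [matEntry, ha, hb, k.isLt, Matrix.transpose_apply]

end Aux

section Ortho
variable {n : ℕ} {A B : Matrix (Fin n) (Fin n) (ZMod 2)}

lemma circ_comm (hA : IsCirculant A) (hB : IsCirculant B) : A * B = B * A := by
  obtain ⟨u, rfl⟩ := hA; obtain ⟨v, rfl⟩ := hB
  exact Matrix.Fin.circulant_mul_comm u v

lemma circ_transpose (hA : IsCirculant A) : IsCirculant Aᵀ := by
  obtain ⟨u, rfl⟩ := hA
  exact ⟨fun i => u (-i), Matrix.Fin.transpose_circulant u⟩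

lemma ortho_sum (hA : IsCirculant A) (hB : IsCirculant B)
    (hAB : A * Aᵀ + B * Bᵀ = 1) (a b : Fin (2 * n)) :
    ∑ j : Fin (4 * n), fourCircEntry A B a j * fourCircEntry A B b j = 0 := by
  have hAAt : Aᵀ * A = A * Aᵀ := circ_comm (circ_transpose hA) hA
  have hBBt : Bᵀ * B = B * Bᵀ := circ_comm (circ_transpose hB) hB
  have hABc : A * B = B * A := circ_comm hA hB
  rw [Fin.sum_univ_eq_sum_range (fun j => fourCircEntry A B a j * fourCircEntry A B b j) (4 * n),
    show 4 * n = 2 * n + (n + n) from by ring, Finset.sum_range_add, Finset.sum_range_add]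
  have h1 : ∑ j ∈ Finset.range (2 * n),
      fourCircEntry A B a j * fourCircEntry A B b j
      = if (a : ℕ) = (b : ℕ) then 1 else 0 := by
    have : ∀ j ∈ Finset.range (2 * n),
        fourCircEntry A B a j * fourCircEntry A B b j
        = if (a : ℕ) = j then (if (b : ℕ) = j then (1 : ZMod 2) else 0) else 0 := by
      intro j hj
      rw [Finset.mem_range] at hj
      rw [fce_lt A B hj, fce_lt A B hj, ite_mul, one_mul, zero_mul]
    rw [Finset.sum_congr rfl this, Finset.sum_ite_eq (Finset.range (2 * n)) (a : ℕ)
      (fun j => if (b : ℕ) = j then (1 : ZMod 2) else 0), if_pos (Finset.mem_range.mpr a.isLt)]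
    simp [eq_comm]
  rw [h1]
  by_cases ha : (a : ℕ) < n <;> by_cases hb : (b : ℕ) < n
  · have h2 : ∑ k ∈ Finset.range n,
        fourCircEntry A B a (2 * n + k) * fourCircEntry A B b (2 * n + k)
        = (A * Aᵀ) ⟨a, ha⟩ ⟨b, hb⟩ := by
      rw [← sum_matRR A A ha hb]
      refine Finset.sum_congr rfl fun k hk => ?_
      rw [Finset.mem_range] at hk
      rw [fce_A A B ha hk, fce_A A B hb hk]
    have h3 : ∑ k ∈ Finset.range n,
        fourCircEntry A B a (2 * n + (n + k)) * fourCircEntry A B b (2 * n + (n + k))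
        = (B * Bᵀ) ⟨a, ha⟩ ⟨b, hb⟩ := by
      rw [← sum_matRR B B ha hb]
      refine Finset.sum_congr rfl fun k hk => ?_
      rw [Finset.mem_range] at hk
      rw [fce_B A B ha hk, fce_B A B hb hk]
    rw [h2, h3, ← add_assoc]
    have := congrArg (fun M => M (⟨a, ha⟩ : Fin n) (⟨b, hb⟩ : Fin n)) hAB
    simp only [Matrix.add_apply] at this
    rw [add_assoc, this, Matrix.one_apply]
    simp only [Fin.mk.injEq]
    split_ifs <;> simp_all [CharTwo.add_self_eq_zero]
  · have hbn : (b : ℕ) - n < n := by omega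
    have h2 : ∑ k ∈ Finset.range n,
        fourCircEntry A B a (2 * n + k) * fourCircEntry A B b (2 * n + k)
        = (A * B) ⟨a, ha⟩ ⟨(b : ℕ) - n, hbn⟩ := by
      rw [← sum_matRC A B ha hbn]
      refine Finset.sum_congr rfl fun k hk => ?_
      rw [Finset.mem_range] at hk
      rw [fce_A A B ha hk, fce_Bt A B hb hk]
    have h3 : ∑ k ∈ Finset.range n,
        fourCircEntry A B a (2 * n + (n + k)) * fourCircEntry A B b (2 * n + (n + k))
        = (B * A) ⟨a, ha⟩ ⟨(b : ℕ) - n, hbn⟩ := by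
      rw [← sum_matRC B A ha hbn]
      refine Finset.sum_congr rfl fun k hk => ?_
      rw [Finset.mem_range] at hk
      rw [fce_B A B ha hk, fce_At A B hb hk]
    rw [h2, h3, if_neg (by omega), hABc, zero_add, CharTwo.add_self_eq_zero]
  · have han : (a : ℕ) - n < n := by omega
    have h2 : ∑ k ∈ Finset.range n,
        fourCircEntry A B a (2 * n + k) * fourCircEntry A B b (2 * n + k)
        = (A * B) ⟨b, hb⟩ ⟨(a : ℕ) - n, han⟩ := by
      rw [← sum_matRC A B hb han]
      refine Finset.sum_congr rfl fun k hk => ?_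
      rw [Finset.mem_range] at hk
      rw [fce_Bt A B ha hk, fce_A A B hb hk, mul_comm]
    have h3 : ∑ k ∈ Finset.range n,
        fourCircEntry A B a (2 * n + (n + k)) * fourCircEntry A B b (2 * n + (n + k))
        = (B * A) ⟨b, hb⟩ ⟨(a : ℕ) - n, han⟩ := by
      rw [← sum_matRC B A hb han]
      refine Finset.sum_congr rfl fun k hk => ?_
      rw [Finset.mem_range] at hk
      rw [fce_At A B ha hk, fce_B A B hb hk, mul_comm]
    rw [h2, h3, if_neg (by omega), hABc, zero_add, CharTwo.add_self_eq_zero]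
  · have han : (a : ℕ) - n < n := by omega
    have hbn : (b : ℕ) - n < n := by omega
    have h2 : ∑ k ∈ Finset.range n,
        fourCircEntry A B a (2 * n + k) * fourCircEntry A B b (2 * n + k)
        = (Bᵀ * B) ⟨(a : ℕ) - n, han⟩ ⟨(b : ℕ) - n, hbn⟩ := by
      rw [← sum_matCC B B han hbn]
      refine Finset.sum_congr rfl fun k hk => ?_
      rw [Finset.mem_range] at hk
      rw [fce_Bt A B ha hk, fce_Bt A B hb hk]
    have h3 : ∑ k ∈ Finset.range n,
        fourCircEntry A B a (2 * n + (n + k)) * fourCircEntry A B b (2 * n + (n + k))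
        = (Aᵀ * A) ⟨(a : ℕ) - n, han⟩ ⟨(b : ℕ) - n, hbn⟩ := by
      rw [← sum_matCC A A han hbn]
      refine Finset.sum_congr rfl fun k hk => ?_
      rw [Finset.mem_range] at hk
      rw [fce_At A B ha hk, fce_At A B hb hk]
    rw [h2, h3, hAAt, hBBt, ← add_assoc]
    have := congrArg (fun M => M (⟨(a:ℕ) - n, han⟩ : Fin n) (⟨(b:ℕ) - n, hbn⟩ : Fin n)) hAB
    simp only [Matrix.add_apply] at this
    rw [add_assoc, add_comm ((B*Bᵀ) _ _), this, Matrix.one_apply]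
    simp only [Fin.mk.injEq]
    have : ((a:ℕ) = (b:ℕ)) ↔ ((a:ℕ) - n = (b:ℕ) - n) := by omega
    split_ifs <;> simp_all [CharTwo.add_self_eq_zero]
end Ortho


section Main
variable {n : ℕ} (A B : Matrix (Fin n) (Fin n) (ZMod 2))

lemma mem_dualCode {m : ℕ} {C : Submodule (ZMod 2) (Fin m → ZMod 2)}
    {x : Fin m → ZMod 2} : x ∈ dualCode C ↔ ∀ y ∈ C, ∑ i, x i * y i = 0 := Iff.rfl

/-- The linear map sending `x` to its inner products with the generator rows. -/
def fourCircMap (n : ℕ) (A B : Matrix (Fin n) (Fin n) (ZMod 2)) :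
    (Fin (4 * n) → ZMod 2) →ₗ[ZMod 2] (Fin (2 * n) → ZMod 2) where
  toFun x := fun i => ∑ j, x j * fourCircEntry A B (i : ℕ) (j : ℕ)
  map_add' x y := by
    funext i
    simp [add_mul, Finset.sum_add_distrib]
  map_smul' c x := by
    funext i
    simp [Finset.mul_sum, mul_assoc]

lemma gen_linearIndependent :
    LinearIndependent (ZMod 2)
      (fun i : Fin (2 * n) => fun j : Fin (4 * n) => fourCircEntry A B (i : ℕ) (j : ℕ)) := by
  rw [Fintype.linearIndependent_iff]
  intro c hc i
  have hlt : (i : ℕ) < 4 * n := by omega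
  have := congrFun hc ⟨(i : ℕ), hlt⟩
  rw [Finset.sum_apply] at this
  simp only [Pi.smul_apply, smul_eq_mul, Pi.zero_apply] at this
  have heq : ∀ i' : Fin (2 * n),
      c i' * fourCircEntry A B (i' : ℕ) ((⟨(i : ℕ), hlt⟩ : Fin (4 * n)) : ℕ)
      = if i' = i then c i' else 0 := by
    intro i'
    rw [fce_lt A B (show ((⟨(i : ℕ), hlt⟩ : Fin (4 * n)) : ℕ) < 2 * n from i.isLt)]
    simp [Fin.val_inj, mul_ite]
  rw [Finset.sum_congr rfl (fun i' _ => heq i'), Finset.sum_ite_eq' Finset.univ i c] at this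
  simpa using this

lemma fourCircMap_surjective : Function.Surjective (fourCircMap n A B) := by
  intro t
  refine ⟨fun j => if h : (j : ℕ) < 2 * n then t ⟨(j : ℕ), h⟩ else 0, ?_⟩
  funext i
  show (∑ j : Fin (4 * n),
    (if h : (j : ℕ) < 2 * n then t ⟨(j : ℕ), h⟩ else 0) * fourCircEntry A B (i : ℕ) (j : ℕ)) = t i
  have hlt : (i : ℕ) < 4 * n := by omega
  rw [Finset.sum_eq_single (⟨(i : ℕ), hlt⟩ : Fin (4 * n))]
  · rw [dif_pos i.isLt, fce_lt A B (show ((⟨(i : ℕ), hlt⟩ : Fin (4 * n)) : ℕ) < 2 * n from i.isLt),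
      if_pos rfl, mul_one]
  · intro j _ hj
    by_cases hj2 : (j : ℕ) < 2 * n
    · rw [dif_pos hj2, fce_lt A B hj2, if_neg, mul_zero]
      intro h
      exact hj (Fin.ext h.symm)
    · rw [dif_neg hj2, zero_mul]
  · intro h
    exact absurd (Finset.mem_univ _) h

lemma dualCode_eq_ker :
    dualCode (fourCircCode n A B) = LinearMap.ker (fourCircMap n A B) := by
  ext x
  rw [mem_dualCode, LinearMap.mem_ker]
  constructor
  · intro hx
    funext i
    exact hx _ (Submodule.subset_span ⟨i, rfl⟩)
  · intro hx y hy
    induction hy using Submodule.span_induction with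
    | mem y hy =>
      obtain ⟨i, rfl⟩ := hy
      exact congrFun hx i
    | zero => simp
    | add y z _ _ hy hz => simp [mul_add, Finset.sum_add_distrib, hy, hz]
    | smul c y _ hy =>
      have e : ∀ j, x j * (c • y) j = c * (x j * y j) := fun j => by
        simp only [Pi.smul_apply, smul_eq_mul]; ring
      rw [Finset.sum_congr rfl fun j _ => e j, ← Finset.mul_sum, hy, mul_zero]

lemma wt_gen_zero (hn : 0 < n) :
    wt (fun j : Fin (4 * n) => fourCircEntry A B 0 (j : ℕ))
      = 1 + wt (fun j => A ⟨0, hn⟩ j) + wt (fun j => B ⟨0, hn⟩ j) := by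
  classical
  have hwt_eq : ∀ (m : ℕ) (x : Fin m → ZMod 2),
      wt x = ∑ j : Fin m, if x j ≠ 0 then 1 else 0 := fun m x =>
    Finset.card_filter _ _
  rw [hwt_eq, hwt_eq, hwt_eq,
    Fin.sum_univ_eq_sum_range (fun j => if fourCircEntry A B 0 j ≠ 0 then 1 else 0) (4 * n),
    show 4 * n = 2 * n + (n + n) from by ring, Finset.sum_range_add, Finset.sum_range_add]
  have h1 : ∑ j ∈ Finset.range (2 * n), (if fourCircEntry A B 0 j ≠ 0 then 1 else 0)
      = 1 := by
    have : ∀ j ∈ Finset.range (2 * n),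
        (if fourCircEntry A B 0 j ≠ 0 then 1 else 0) = if (0 : ℕ) = j then 1 else 0 := by
      intro j hj
      rw [Finset.mem_range] at hj
      rw [fce_lt A B hj]
      split_ifs with h h2 h2 <;> simp_all
    rw [Finset.sum_congr rfl this,
      Finset.sum_ite_eq (Finset.range (2 * n)) 0 (fun _ => 1),
      if_pos (Finset.mem_range.mpr (by omega))]
  have h2 : ∑ k ∈ Finset.range n, (if fourCircEntry A B 0 (2 * n + k) ≠ 0 then 1 else 0)
      = ∑ k : Fin n, if A ⟨0, hn⟩ k ≠ 0 then 1 else 0 := by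
    have e1 : ∀ k ∈ Finset.range n,
        (if fourCircEntry A B 0 (2 * n + k) ≠ 0 then 1 else 0)
        = (if matEntry A 0 k ≠ 0 then 1 else 0) := by
      intro k hk
      rw [Finset.mem_range] at hk
      rw [fce_A A B hn hk]
    rw [Finset.sum_congr rfl e1,
      ← Fin.sum_univ_eq_sum_range (fun k => if matEntry A 0 k ≠ 0 then 1 else 0) n]
    refine Finset.sum_congr rfl fun k _ => ?_
    simp [matEntry, hn, k.isLt]
  have h3 : ∑ k ∈ Finset.range n, (if fourCircEntry A B 0 (2 * n + (n + k)) ≠ 0 then 1 else 0)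
      = ∑ k : Fin n, if B ⟨0, hn⟩ k ≠ 0 then 1 else 0 := by
    have e1 : ∀ k ∈ Finset.range n,
        (if fourCircEntry A B 0 (2 * n + (n + k)) ≠ 0 then 1 else 0)
        = (if matEntry B 0 k ≠ 0 then 1 else 0) := by
      intro k hk
      rw [Finset.mem_range] at hk
      rw [fce_B A B hn hk]
    rw [Finset.sum_congr rfl e1,
      ← Fin.sum_univ_eq_sum_range (fun k => if matEntry B 0 k ≠ 0 then 1 else 0) n]
    refine Finset.sum_congr rfl fun k _ => ?_
    simp [matEntry, hn, k.isLt]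
  rw [h1, h2, h3]
  ring

end Main

/-- If moreover the sum of the weights of the first rows of `A` and
`B` is congruent to `1` modulo `4`, then the self-dual four-circulant `[4n, 2n]`
code is singly even. -/
theorem four_circulant_singly_even (n : ℕ) (hn : 0 < n)
    (A B : Matrix (Fin n) (Fin n) (ZMod 2))
    (hA : IsCirculant A) (hB : IsCirculant B)
    (hAB : A * Aᵀ + B * Bᵀ = 1)
    (hwt : (wt (fun j => A ⟨0, hn⟩ j) + wt (fun j => B ⟨0, hn⟩ j)) % 4 = 1) :
    IsSelfDual (fourCircCode n A B) ∧ SinglyEven (fourCircCode n A B) := by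
  classical
  have hli := gen_linearIndependent A B
  have hCrank : Module.finrank (ZMod 2) (fourCircCode n A B) = 2 * n := by
    rw [fourCircCode, finrank_span_eq_card hli, Fintype.card_fin]
  have hkerrank : Module.finrank (ZMod 2)
      (LinearMap.ker (fourCircMap n A B)) = 2 * n := by
    have h1 := LinearMap.finrank_range_add_finrank_ker (fourCircMap n A B)
    rw [LinearMap.range_eq_top.mpr (fourCircMap_surjective A B), finrank_top,
      Module.finrank_pi, Module.finrank_pi, Fintype.card_fin, Fintype.card_fin] at h1
    omega
  have hle : fourCircCode n A B ≤ dualCode (fourCircCode n A B) := by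
    rw [fourCircCode, Submodule.span_le]
    rintro _ ⟨i, rfl⟩
    rw [SetLike.mem_coe, mem_dualCode]
    intro y hy
    induction hy using Submodule.span_induction with
    | mem y hy =>
      obtain ⟨i', rfl⟩ := hy
      exact ortho_sum hA hB hAB i i'
    | zero => simp
    | add y z _ _ hy hz => simp [mul_add, Finset.sum_add_distrib, hy, hz]
    | smul c y _ hy =>
      have e : ∀ j : Fin (4 * n), fourCircEntry A B (i : ℕ) (j : ℕ) * (c • y) j
          = c * (fourCircEntry A B (i : ℕ) (j : ℕ) * y j) := fun j => by
        simp only [Pi.smul_apply, smul_eq_mul]; ring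
      rw [Finset.sum_congr rfl fun j _ => e j, ← Finset.mul_sum, hy, mul_zero]
  have hsd : IsSelfDual (fourCircCode n A B) := by
    refine Submodule.eq_of_le_of_finrank_eq hle ?_
    rw [hCrank, dualCode_eq_ker, hkerrank]
  refine ⟨hsd, ?_⟩
  refine ⟨fun j : Fin (4 * n) => fourCircEntry A B ((⟨0, by omega⟩ : Fin (2 * n)) : ℕ) (j : ℕ),
    Submodule.subset_span ⟨⟨0, by omega⟩, rfl⟩, ?_⟩
  have := wt_gen_zero A B hn
  simp only [Fin.val_mk] at this ⊢
  rw [this]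
  omega
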